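/- For all positive integers m, n, r, the number of partial rectangles (π, τ) on an r-element set with π having exactly m blocks and τ having exactly n blocks, viewed as a rational number, equals Σ_{l ≥ r} Σ_{d ∣ l, d ≤ m, l/d ≤ n} (l! / (d! · (l/d)!)) · (−1)^{m+n−(d+l/d)} / ((m−d)! · (n−l/d)! · (l−r)!), where the outer sum has finite support (all terms with l > m·n vanish). -/

import Mathlib

/-- A partial rectangle on the finite set `Fin r`: a pair of set partitions such that
every block of the first meets every block of the second in at most one element. -/
def IsPartialRectangle {r : ℕ} (π τ : Finpartition (Finset.univ : Finset (Fin r))) : Prop :=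
  ∀ B ∈ π.parts, ∀ C ∈ τ.parts, (B ∩ C).card ≤ 1

section PartialRectAuxSection

open Finset Function

namespace PartialRectAux

variable {r : ℕ}




instance kerDec {m : ℕ} (f : Fin r → Fin m) : DecidableRel (Setoid.ker f).r :=
  fun a b => decidable_of_iff (f a = f b) Iff.rfl

/-- The fiber partition of `f`. -/
def fp {m : ℕ} (f : Fin r → Fin m) : Finpartition (Finset.univ : Finset (Fin r)) :=
  Finpartition.ofSetoid (Setoid.ker f)

lemma mem_part_fp {m : ℕ} (f : Fin r → Fin m) (a b : Fin r) :
    b ∈ (fp f).part a ↔ f a = f b :=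
  Finpartition.mem_part_ofSetoid_iff_rel

lemma part_fp_eq_iff {m : ℕ} (f : Fin r → Fin m) (a b : Fin r) :
    (fp f).part a = (fp f).part b ↔ f a = f b := by
  constructor
  · intro h
    have hb : b ∈ (fp f).part a := h ▸ (fp f).mem_part (Finset.mem_univ b)
    exact (mem_part_fp f a b).1 hb
  · intro h
    have hb : b ∈ (fp f).part a := (mem_part_fp f a b).2 h
    exact ((fp f).part_eq_of_mem ((fp f).part_mem.2 (Finset.mem_univ a)) hb).symm

lemma finpartition_eq_of_part_eq {P Q : Finpartition (Finset.univ : Finset (Fin r))}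
    (h : ∀ a, P.part a = Q.part a) : P = Q := by
  ext B
  constructor
  · intro hB
    obtain ⟨a, ha⟩ := P.nonempty_of_mem_parts hB
    rw [← P.part_eq_of_mem hB ha, h]
    exact Q.part_mem.2 (Finset.mem_univ a)
  · intro hB
    obtain ⟨a, ha⟩ := Q.nonempty_of_mem_parts hB
    rw [← Q.part_eq_of_mem hB ha, ← h]
    exact P.part_mem.2 (Finset.mem_univ a)

lemma card_parts_fp {m : ℕ} (f : Fin r → Fin m) (hf : Surjective f) :
    (fp f).parts.card = m := by
  have hbij : Bijective (fun i : Fin m =>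
      (⟨(fp f).part (surjInv hf i), (fp f).part_mem.2 (Finset.mem_univ _)⟩ :
        (fp f).parts)) := by
    constructor
    · intro i j hij
      have h2 : (fp f).part (surjInv hf i) = (fp f).part (surjInv hf j) :=
        congrArg Subtype.val hij
      rw [part_fp_eq_iff, surjInv_eq hf, surjInv_eq hf] at h2
      exact h2
    · rintro ⟨B, hB⟩
      obtain ⟨a, ha⟩ := (fp f).nonempty_of_mem_parts hB
      refine ⟨f a, Subtype.ext ?_⟩
      have : (fp f).part (surjInv hf (f a)) = (fp f).part a := by
        rw [part_fp_eq_iff, surjInv_eq hf]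
      show (fp f).part (surjInv hf (f a)) = B
      rw [this, (fp f).part_eq_of_mem hB ha]
  have := Fintype.card_of_bijective hbij
  simpa using this.symm


variable {r : ℕ}

/-- Surjections inducing a given partition are in bijection with labellings of its parts. -/
noncomputable def fiberEquiv {m : ℕ} (π : Finpartition (Finset.univ : Finset (Fin r))) :
    {f : Fin r → Fin m // Surjective f ∧ fp f = π} ≃ (↥π.parts ≃ Fin m) where
  toFun x := Equiv.ofBijective
    (fun B => x.1 ((B : Finset (Fin r)).min' (π.nonempty_of_mem_parts B.2)))
    (by
      obtain ⟨f, hs, hπ⟩ := x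
      subst hπ
      constructor
      · rintro ⟨B, hB⟩ ⟨C, hC⟩ h
        simp only at h
        have hBp : (fp f).part (B.min' ((fp f).nonempty_of_mem_parts hB)) = B :=
          (fp f).part_eq_of_mem hB (B.min'_mem _)
        have hCp : (fp f).part (C.min' ((fp f).nonempty_of_mem_parts hC)) = C :=
          (fp f).part_eq_of_mem hC (C.min'_mem _)
        have := (part_fp_eq_iff f _ _).2 h
        rw [hBp, hCp] at this
        exact Subtype.ext this
      · intro i
        obtain ⟨x, hx⟩ := hs i
        refine ⟨⟨(fp f).part x, (fp f).part_mem.2 (Finset.mem_univ x)⟩, ?_⟩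
        have hne := (fp f).nonempty_of_mem_parts ((fp f).part_mem.2 (Finset.mem_univ x))
        have hmem : ((fp f).part x).min' hne ∈ (fp f).part x := Finset.min'_mem _ _
        show f (((fp f).part x).min' _) = i
        rw [← hx]
        exact ((mem_part_fp f x _).1 hmem).symm)
  invFun e := ⟨fun x => e ⟨π.part x, π.part_mem.2 (Finset.mem_univ x)⟩, by
    constructor
    · intro i
      obtain ⟨a, ha⟩ := π.nonempty_of_mem_parts (e.symm i).2
      refine ⟨a, ?_⟩
      have h2 : (⟨π.part a, π.part_mem.2 (Finset.mem_univ a)⟩ : ↥π.parts) = e.symm i :=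
        Subtype.ext (π.part_eq_of_mem (e.symm i).2 ha)
      show e ⟨π.part a, _⟩ = i
      rw [h2, Equiv.apply_symm_apply]
    · apply finpartition_eq_of_part_eq
      intro a
      apply Finset.ext
      intro b
      rw [mem_part_fp]
      constructor
      · intro h
        have h2 : (⟨π.part a, _⟩ : ↥π.parts) = ⟨π.part b, _⟩ := e.injective h
        have h3 : π.part a = π.part b := congrArg Subtype.val h2
        exact h3 ▸ π.mem_part (Finset.mem_univ b)
      · intro h
        have : π.part b = π.part a := π.part_eq_of_mem (π.part_mem.2 (Finset.mem_univ a)) h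
        exact congrArg e (Subtype.ext this.symm)⟩
  left_inv := by
    rintro ⟨f, hs, hπ⟩
    subst hπ
    apply Subtype.ext
    funext x
    have hne := (fp f).nonempty_of_mem_parts ((fp f).part_mem.2 (Finset.mem_univ x))
    have hmem : ((fp f).part x).min' hne ∈ (fp f).part x := Finset.min'_mem _ _
    show f (((fp f).part x).min' _) = f x
    exact ((mem_part_fp f x _).1 hmem).symm
  right_inv := by
    intro e
    apply Equiv.ext
    rintro ⟨B, hB⟩
    simp only [Equiv.ofBijective_apply]
    congr 1
    exact Subtype.ext (π.part_eq_of_mem hB (B.min'_mem _))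

lemma card_fiber {m : ℕ} (π : Finpartition (Finset.univ : Finset (Fin r)))
    (hπ : π.parts.card = m) :
    Nat.card {f : Fin r → Fin m // Surjective f ∧ fp f = π} = m.factorial := by
  rw [Nat.card_congr (fiberEquiv π)]
  have hcard : Fintype.card ↥π.parts = m := by simpa using hπ
  have e0 : ↥π.parts ≃ Fin m := by
    rw [← hcard]; exact Fintype.equivFin _
  rw [Nat.card_eq_fintype_card, Fintype.card_equiv e0, hcard]
variable {r : ℕ}

lemma rect_of_inj {m n : ℕ} (f : Fin r → Fin m) (g : Fin r → Fin n)
    (h : Injective fun x => (f x, g x)) : IsPartialRectangle (fp f) (fp g) := by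
  intro B hB C hC
  rw [Finset.card_le_one]
  intro x hx y hy
  rw [Finset.mem_inter] at hx hy
  have hBx : (fp f).part x = B := (fp f).part_eq_of_mem hB hx.1
  have hCx : (fp g).part x = C := (fp g).part_eq_of_mem hC hx.2
  have h1 : f x = f y := (mem_part_fp f x y).1 (hBx ▸ hy.1)
  have h2 : g x = g y := (mem_part_fp g x y).1 (hCx ▸ hy.2)
  exact h (Prod.ext h1 h2)

lemma inj_of_rect {m n : ℕ} (f : Fin r → Fin m) (g : Fin r → Fin n)
    (h : IsPartialRectangle (fp f) (fp g)) : Injective fun x => (f x, g x) := by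
  intro x y hxy
  simp only [Prod.mk.injEq] at hxy
  have h1 := h ((fp f).part x) ((fp f).part_mem.2 (Finset.mem_univ x))
    ((fp g).part x) ((fp g).part_mem.2 (Finset.mem_univ x))
  rw [Finset.card_le_one] at h1
  refine h1 x ?_ y ?_ <;> rw [Finset.mem_inter]
  · exact ⟨(fp f).mem_part (Finset.mem_univ x), (fp g).mem_part (Finset.mem_univ x)⟩
  · exact ⟨(mem_part_fp f x y).2 hxy.1, (mem_part_fp g x y).2 hxy.2⟩

/-- Pairs of surjections with jointly injective product map, up to the induced partitions. -/
def bigEquiv (m n : ℕ) :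
    {fg : (Fin r → Fin m) × (Fin r → Fin n) //
        Surjective fg.1 ∧ Surjective fg.2 ∧ Injective fun x => (fg.1 x, fg.2 x)} ≃
    (Σ p : {p : Finpartition (Finset.univ : Finset (Fin r)) ×
        Finpartition (Finset.univ : Finset (Fin r)) //
        IsPartialRectangle p.1 p.2 ∧ p.1.parts.card = m ∧ p.2.parts.card = n},
      {f : Fin r → Fin m // Surjective f ∧ fp f = p.1.1} ×
      {g : Fin r → Fin n // Surjective g ∧ fp g = p.1.2}) where
  toFun x := ⟨⟨(fp x.1.1, fp x.1.2),
      rect_of_inj _ _ x.2.2.2, card_parts_fp _ x.2.1, card_parts_fp _ x.2.2.1⟩,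
    ⟨x.1.1, x.2.1, rfl⟩, ⟨x.1.2, x.2.2.1, rfl⟩⟩
  invFun y := ⟨(y.2.1.1, y.2.2.1), y.2.1.2.1, y.2.2.2.1, by
    apply inj_of_rect
    rw [y.2.1.2.2, y.2.2.2.2]
    exact y.1.2.1⟩
  left_inv x := rfl
  right_inv := by
    rintro ⟨⟨⟨π, τ⟩, hp⟩, ⟨f, hf, hfp⟩, ⟨g, hg, hgp⟩⟩
    simp only at hfp hgp
    subst hfp
    subst hgp
    rfl

lemma card_X (m n : ℕ) :
    Nat.card {fg : (Fin r → Fin m) × (Fin r → Fin n) //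
        Surjective fg.1 ∧ Surjective fg.2 ∧ Injective fun x => (fg.1 x, fg.2 x)} =
      Nat.card {p : Finpartition (Finset.univ : Finset (Fin r)) ×
          Finpartition (Finset.univ : Finset (Fin r)) //
          IsPartialRectangle p.1 p.2 ∧ p.1.parts.card = m ∧ p.2.parts.card = n} *
        (m.factorial * n.factorial) := by
  classical
  rw [Nat.card_congr (bigEquiv m n)]
  rw [Nat.card_eq_fintype_card, Fintype.card_sigma]
  have hterm : ∀ p : {p : Finpartition (Finset.univ : Finset (Fin r)) ×
      Finpartition (Finset.univ : Finset (Fin r)) //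
      IsPartialRectangle p.1 p.2 ∧ p.1.parts.card = m ∧ p.2.parts.card = n},
      Fintype.card ({f : Fin r → Fin m // Surjective f ∧ fp f = p.1.1} ×
        {g : Fin r → Fin n // Surjective g ∧ fp g = p.1.2}) = m.factorial * n.factorial := by
    intro p
    rw [Fintype.card_prod, ← Nat.card_eq_fintype_card, ← Nat.card_eq_fintype_card,
      card_fiber _ p.2.2.1, card_fiber _ p.2.2.2]
  rw [Finset.sum_congr rfl (fun p _ => hterm p), Finset.sum_const, Finset.card_univ,
    Nat.card_eq_fintype_card, smul_eq_mul]
variable {r : ℕ}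

/-- Jointly injective pairs of maps are embeddings into the product. -/
def injEquiv (a b : ℕ) :
    {fg : (Fin r → Fin a) × (Fin r → Fin b) // Injective fun x => (fg.1 x, fg.2 x)} ≃
      (Fin r ↪ Fin a × Fin b) where
  toFun x := ⟨fun i => (x.1.1 i, x.1.2 i), x.2⟩
  invFun h := ⟨(fun i => (h i).1, fun i => (h i).2), fun x y hxy => by
    apply h.injective
    simp only [Prod.mk.injEq] at hxy
    exact Prod.ext hxy.1 hxy.2⟩
  left_inv x := rfl
  right_inv h := rfl

lemma card_inj (a b : ℕ) :
    Nat.card {fg : (Fin r → Fin a) × (Fin r → Fin b) //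
        Injective fun x => (fg.1 x, fg.2 x)} = (a * b).descFactorial r := by
  rw [Nat.card_congr (injEquiv a b), Nat.card_eq_fintype_card, Fintype.card_embedding_eq]
  simp

/-- Injective pairs with prescribed images correspond to surjective injective pairs. -/
noncomputable def zEquiv {a b : ℕ} (s : Finset (Fin a)) (t : Finset (Fin b)) :
    {fg : (Fin r → Fin a) × (Fin r → Fin b) //
        (Injective fun x => (fg.1 x, fg.2 x)) ∧
          Finset.univ.image fg.1 = s ∧ Finset.univ.image fg.2 = t} ≃
    {fg : (Fin r → Fin s.card) × (Fin r → Fin t.card) //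
        Surjective fg.1 ∧ Surjective fg.2 ∧ Injective fun x => (fg.1 x, fg.2 x)} where
  toFun x := ⟨(fun i => s.equivFin ⟨x.1.1 i, by
        have := Finset.mem_image_of_mem x.1.1 (Finset.mem_univ i); rwa [x.2.2.1] at this⟩,
      fun i => t.equivFin ⟨x.1.2 i, by
        have := Finset.mem_image_of_mem x.1.2 (Finset.mem_univ i); rwa [x.2.2.2] at this⟩), by
    obtain ⟨⟨f, g⟩, hinj, hs, ht⟩ := x
    refine ⟨?_, ?_, ?_⟩
    · intro i
      have hy : (↑(s.equivFin.symm i) : Fin a) ∈ Finset.image f Finset.univ := by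
        rw [show Finset.image f Finset.univ = s from hs]; exact (s.equivFin.symm i).2
      obtain ⟨x, _, hx⟩ := Finset.mem_image.1 hy
      refine ⟨x, ?_⟩
      show s.equivFin ⟨f x, _⟩ = i
      exact (congrArg s.equivFin (Subtype.ext hx)).trans (s.equivFin.apply_symm_apply i)
    · intro i
      have hy : (↑(t.equivFin.symm i) : Fin b) ∈ Finset.image g Finset.univ := by
        rw [show Finset.image g Finset.univ = t from ht]; exact (t.equivFin.symm i).2
      obtain ⟨x, _, hx⟩ := Finset.mem_image.1 hy
      refine ⟨x, ?_⟩
      show t.equivFin ⟨g x, _⟩ = i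
      exact (congrArg t.equivFin (Subtype.ext hx)).trans (t.equivFin.apply_symm_apply i)
    · intro x y hxy
      simp only [Prod.mk.injEq] at hxy
      have h1 : f x = f y := congrArg Subtype.val (s.equivFin.injective hxy.1)
      have h2 : g x = g y := congrArg Subtype.val (t.equivFin.injective hxy.2)
      exact hinj (Prod.ext h1 h2)⟩
  invFun y := ⟨(fun i => ↑(s.equivFin.symm (y.1.1 i)), fun i => ↑(t.equivFin.symm (y.1.2 i))), by
    obtain ⟨⟨f, g⟩, hf, hg, hinj⟩ := y
    refine ⟨?_, ?_, ?_⟩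
    · intro x y hxy
      simp only [Prod.mk.injEq] at hxy
      have h1 : f x = f y := s.equivFin.symm.injective (Subtype.coe_injective hxy.1)
      have h2 : g x = g y := t.equivFin.symm.injective (Subtype.coe_injective hxy.2)
      exact hinj (Prod.ext h1 h2)
    · apply Finset.ext
      intro y
      simp only [Finset.mem_image, Finset.mem_univ, true_and]
      constructor
      · rintro ⟨x, rfl⟩; exact (s.equivFin.symm (f x)).2
      · intro hy
        obtain ⟨x, hx⟩ := hf (s.equivFin ⟨y, hy⟩)
        exact ⟨x, by rw [show f x = s.equivFin ⟨y, hy⟩ from hx, Equiv.symm_apply_apply]⟩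
    · apply Finset.ext
      intro y
      simp only [Finset.mem_image, Finset.mem_univ, true_and]
      constructor
      · rintro ⟨x, rfl⟩; exact (t.equivFin.symm (g x)).2
      · intro hy
        obtain ⟨x, hx⟩ := hg (t.equivFin ⟨y, hy⟩)
        exact ⟨x, by rw [show g x = t.equivFin ⟨y, hy⟩ from hx, Equiv.symm_apply_apply]⟩⟩
  left_inv := by
    rintro ⟨⟨f, g⟩, hinj, hs, ht⟩
    apply Subtype.ext
    apply Prod.ext <;> funext i <;> simp
  right_inv := by
    rintro ⟨⟨f, g⟩, hf, hg, hinj⟩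
    apply Subtype.ext
    apply Prod.ext <;> funext i <;> simp
/-- The number of pairs of surjections `Fin r → Fin i`, `Fin r → Fin j` whose product map
is injective. -/
noncomputable def cc (r i j : ℕ) : ℕ :=
  Nat.card {fg : (Fin r → Fin i) × (Fin r → Fin j) //
    Surjective fg.1 ∧ Surjective fg.2 ∧ Injective fun x => (fg.1 x, fg.2 x)}

/-- Repackage a fiber of the image-pair map as an exact-image subtype. -/
def repack {r a b : ℕ} (st : Finset (Fin a) × Finset (Fin b)) :
    {y : {fg : (Fin r → Fin a) × (Fin r → Fin b) // Injective fun x => (fg.1 x, fg.2 x)} //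
        (Finset.univ.image y.1.1, Finset.univ.image y.1.2) = st} ≃
    {fg : (Fin r → Fin a) × (Fin r → Fin b) //
        (Injective fun x => (fg.1 x, fg.2 x)) ∧
          Finset.univ.image fg.1 = st.1 ∧ Finset.univ.image fg.2 = st.2} where
  toFun y := ⟨y.1.1, y.1.2, congrArg Prod.fst y.2, congrArg Prod.snd y.2⟩
  invFun z := ⟨⟨z.1, z.2.1⟩, Prod.ext z.2.2.1 z.2.2.2⟩
  left_inv y := rfl
  right_inv z := rfl

lemma descFactorial_eq_sum (r a b : ℕ) :
    (a * b).descFactorial r =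
      ∑ i ∈ Finset.range (a + 1), ∑ j ∈ Finset.range (b + 1),
        a.choose i * (b.choose j * cc r i j) := by
  classical
  rw [← card_inj (r := r) a b]
  rw [← Nat.card_congr (Equiv.sigmaFiberEquiv
    (fun y : {fg : (Fin r → Fin a) × (Fin r → Fin b) //
        Injective fun x => (fg.1 x, fg.2 x)} =>
      (Finset.univ.image y.1.1, Finset.univ.image y.1.2)))]
  rw [Nat.card_eq_fintype_card, Fintype.card_sigma]
  have hterm : ∀ st : Finset (Fin a) × Finset (Fin b),
      Fintype.card {y : {fg : (Fin r → Fin a) × (Fin r → Fin b) //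
          Injective fun x => (fg.1 x, fg.2 x)} //
          (Finset.univ.image y.1.1, Finset.univ.image y.1.2) = st} = cc r st.1.card st.2.card := by
    intro st
    rw [← Nat.card_eq_fintype_card, Nat.card_congr ((repack st).trans (zEquiv st.1 st.2))]
    rfl
  rw [Finset.sum_congr rfl fun st _ => hterm st]
  rw [Fintype.sum_prod_type]
  have hb : ∀ i : ℕ, ∑ t : Finset (Fin b), cc r i t.card =
      ∑ j ∈ Finset.range (b + 1), b.choose j * cc r i j := by
    intro i
    rw [show (Finset.univ : Finset (Finset (Fin b))) = (Finset.univ : Finset (Fin b)).powerset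
      from Finset.powerset_univ.symm]
    rw [Finset.sum_powerset_apply_card (fun k => cc r i k)]
    simp [smul_eq_mul]
  calc ∑ s : Finset (Fin a), ∑ t : Finset (Fin b), cc r s.card t.card
      = ∑ s : Finset (Fin a), ∑ j ∈ Finset.range (b + 1), b.choose j * cc r s.card j := by
        exact Finset.sum_congr rfl fun s _ => hb s.card
    _ = ∑ i ∈ Finset.range (a + 1), a.choose i *
          ∑ j ∈ Finset.range (b + 1), b.choose j * cc r i j := by
        rw [show (Finset.univ : Finset (Finset (Fin a))) = (Finset.univ : Finset (Fin a)).powerset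
          from Finset.powerset_univ.symm]
        rw [Finset.sum_powerset_apply_card
          (fun k => ∑ j ∈ Finset.range (b + 1), b.choose j * cc r k j)]
        simp [smul_eq_mul]
    _ = _ := by simp [Finset.mul_sum]
lemma alt_sum (N : ℕ) :
    ∑ j ∈ Finset.range (N + 1), (-1 : ℚ) ^ (N - j) * (N.choose j : ℚ) =
      if N = 0 then 1 else 0 := by
  have hcast : ∑ j ∈ Finset.range (N + 1), (-1 : ℚ) ^ j * (N.choose j : ℚ) =
      if N = 0 then 1 else 0 := by
    exact_mod_cast (Int.alternating_sum_range_choose (n := N))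
  rw [← hcast]
  rw [← Finset.sum_range_reflect (fun j => (-1 : ℚ) ^ (N - j) * (N.choose j : ℚ)) (N + 1)]
  refine Finset.sum_congr rfl fun j hj => ?_
  rw [Finset.mem_range] at hj
  have hjN : j ≤ N := Nat.lt_succ_iff.1 hj
  rw [show N + 1 - 1 - j = N - j from by omega, Nat.sub_sub_self hjN, Nat.choose_symm hjN]

lemma binom_inv (F G : ℕ → ℚ)
    (h : ∀ a, F a = ∑ i ∈ Finset.range (a + 1), (a.choose i : ℚ) * G i) (M : ℕ) :
    G M = ∑ i ∈ Finset.range (M + 1), (-1 : ℚ) ^ (M - i) * (M.choose i : ℚ) * F i := by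
  have step1 : ∀ i ∈ Finset.range (M + 1),
      (-1 : ℚ) ^ (M - i) * (M.choose i : ℚ) * F i =
        ∑ k ∈ Finset.range (M + 1),
          (-1 : ℚ) ^ (M - i) * (M.choose i : ℚ) * ((i.choose k : ℚ) * G k) := by
    intro i hi
    rw [Finset.mem_range] at hi
    rw [h i, Finset.mul_sum]
    apply Finset.sum_subset
    · exact Finset.range_subset_range.2 (by omega)
    · intro k _ hk
      rw [Finset.mem_range, not_lt] at hk
      have : i.choose k = 0 := Nat.choose_eq_zero_of_lt (by omega)
      rw [this]
      simp
  rw [Finset.sum_congr rfl step1, Finset.sum_comm]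
  have inner : ∀ k ∈ Finset.range (M + 1),
      ∑ i ∈ Finset.range (M + 1),
        (-1 : ℚ) ^ (M - i) * (M.choose i : ℚ) * ((i.choose k : ℚ) * G k) =
      (if k = M then 1 else 0) * G k := by
    intro k hk
    rw [Finset.mem_range] at hk
    have hkM : k ≤ M := Nat.lt_succ_iff.1 hk
    have hsum : ∑ i ∈ Finset.range (M + 1),
        (-1 : ℚ) ^ (M - i) * ((M.choose i : ℚ) * (i.choose k : ℚ)) =
        if k = M then 1 else 0 := by
      have hzero : ∀ i ∈ Finset.range k,
          (-1 : ℚ) ^ (M - i) * ((M.choose i : ℚ) * (i.choose k : ℚ)) = 0 := by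
        intro i hi
        rw [Finset.mem_range] at hi
        rw [Nat.choose_eq_zero_of_lt hi]
        simp
      have hsplit : Finset.range (M + 1) =
          Finset.range k ∪ Finset.Ico k (M + 1) := by
        rw [Finset.range_eq_Ico, Finset.range_eq_Ico]
        exact (Finset.Ico_union_Ico_eq_Ico (a := 0) (b := k) (c := M + 1) (by omega) (by omega)).symm
      rw [hsplit, Finset.sum_union (by
        rw [Finset.range_eq_Ico]
        exact Finset.Ico_disjoint_Ico_consecutive 0 k (M + 1))]
      rw [Finset.sum_eq_zero hzero, zero_add]
      have hre : ∑ i ∈ Finset.Ico k (M + 1),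
          (-1 : ℚ) ^ (M - i) * ((M.choose i : ℚ) * (i.choose k : ℚ)) =
          ∑ j ∈ Finset.range (M - k + 1),
            (M.choose k : ℚ) * ((-1 : ℚ) ^ (M - k - j) * ((M - k).choose j : ℚ)) := by
        rw [show Finset.Ico k (M + 1) = Finset.Ico k (k + (M - k + 1)) from by congr 1; omega]
        rw [Finset.sum_Ico_eq_sum_range]
        rw [show k + (M - k + 1) - k = M - k + 1 from by omega]
        refine Finset.sum_congr rfl fun j hj => ?_
        rw [Finset.mem_range] at hj
        have hchoose : M.choose (k + j) * (k + j).choose k = M.choose k * (M - k).choose j := by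
          have := Nat.choose_mul (n := M) (show k ≤ k + j from by omega)
          simpa [Nat.add_sub_cancel_left] using this
        have hMkj : M - (k + j) = M - k - j := by omega
        have hc : ((M.choose (k + j) : ℚ)) * (((k + j).choose k : ℚ)) =
            (M.choose k : ℚ) * ((M - k).choose j : ℚ) := by exact_mod_cast hchoose
        rw [hMkj]
        linear_combination ((-1 : ℚ) ^ (M - k - j)) * hc
      rw [hre, ← Finset.mul_sum, alt_sum (M - k)]
      rcases eq_or_ne k M with rfl | hne
      · simp
      · have : M - k ≠ 0 := by omega
        simp [this, hne]
    calc ∑ i ∈ Finset.range (M + 1),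
        (-1 : ℚ) ^ (M - i) * (M.choose i : ℚ) * ((i.choose k : ℚ) * G k)
        = (∑ i ∈ Finset.range (M + 1),
            (-1 : ℚ) ^ (M - i) * ((M.choose i : ℚ) * (i.choose k : ℚ))) * G k := by
          rw [Finset.sum_mul]; exact Finset.sum_congr rfl fun i _ => by ring
      _ = (if k = M then 1 else 0) * G k := by rw [hsum]
  rw [Finset.sum_congr rfl inner]
  simp
lemma cc_eq (r m n : ℕ) :
    (cc r m n : ℚ) =
      ∑ i ∈ Finset.range (m + 1), ∑ j ∈ Finset.range (n + 1),
        (-1 : ℚ) ^ (m - i) * (m.choose i : ℚ) *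
          ((-1 : ℚ) ^ (n - j) * (n.choose j : ℚ) * (((i * j).descFactorial r : ℕ) : ℚ)) := by
  set K : ℕ → ℕ → ℚ := fun a j => ∑ i ∈ Finset.range (a + 1), (a.choose i : ℚ) * (cc r i j : ℚ)
    with hKdef
  have hF : ∀ a b, (((a * b).descFactorial r : ℕ) : ℚ) =
      ∑ j ∈ Finset.range (b + 1), (b.choose j : ℚ) * K a j := by
    intro a b
    have h0 := descFactorial_eq_sum r a b
    have h1 : (((a * b).descFactorial r : ℕ) : ℚ) =
        ∑ i ∈ Finset.range (a + 1), ∑ j ∈ Finset.range (b + 1),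
          (a.choose i : ℚ) * ((b.choose j : ℚ) * (cc r i j : ℚ)) := by
      rw [h0]; push_cast; rfl
    rw [h1, Finset.sum_comm]
    refine Finset.sum_congr rfl fun j _ => ?_
    rw [hKdef, Finset.mul_sum]
    exact Finset.sum_congr rfl fun i _ => by ring
  have hK : ∀ a, ∀ N, K a N = ∑ j ∈ Finset.range (N + 1),
      (-1 : ℚ) ^ (N - j) * (N.choose j : ℚ) * (((a * j).descFactorial r : ℕ) : ℚ) :=
    fun a => binom_inv _ _ (hF a)
  have hG : (cc r m n : ℚ) = ∑ i ∈ Finset.range (m + 1),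
      (-1 : ℚ) ^ (m - i) * (m.choose i : ℚ) * K i n :=
    binom_inv (fun a => K a n) (fun i => (cc r i n : ℚ)) (fun a => rfl) m
  rw [hG]
  refine Finset.sum_congr rfl fun i _ => ?_
  rw [hK i n, Finset.mul_sum]
lemma term_eq {r m n l d : ℕ} (hr : 0 < r) (hdvd : d ∣ l) (hl0 : l ≠ 0) (hdm : d ≤ m)
    (hjn : l / d ≤ n) (hrl : r ≤ l) :
    (-1 : ℚ) ^ (m - d) * (m.choose d : ℚ) *
        ((-1 : ℚ) ^ (n - l / d) * ((n.choose (l / d)) : ℚ) *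
          (((d * (l / d)).descFactorial r : ℕ) : ℚ)) /
        ((m.factorial : ℚ) * (n.factorial : ℚ)) =
      ((l.factorial : ℚ) / ((d.factorial : ℚ) * ((l / d).factorial : ℚ))) *
        (-1 : ℚ) ^ (m + n - (d + l / d)) /
          (((m - d).factorial : ℚ) * ((n - l / d).factorial : ℚ) *
            ((l - r).factorial : ℚ)) := by
  set j := l / d with hj
  have hdj : d * j = l := Nat.mul_div_cancel' hdvd
  have hsign : (-1 : ℚ) ^ (m - d) * (-1 : ℚ) ^ (n - j) = (-1 : ℚ) ^ (m + n - (d + j)) := by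
    rw [← pow_add]
    congr 1
    omega
  have hdesc : (((d * j).descFactorial r : ℕ) : ℚ) = (l.factorial : ℚ) / ((l - r).factorial : ℚ) := by
    rw [hdj]
    have h1 := Nat.factorial_mul_descFactorial hrl
    have h2 : (((l - r).factorial : ℕ) : ℚ) * ((l.descFactorial r : ℕ) : ℚ) = (l.factorial : ℚ) := by
      exact_mod_cast congrArg (Nat.cast : ℕ → ℚ) h1
    have h3 : ((l - r).factorial : ℚ) ≠ 0 := Nat.cast_ne_zero.2 (l - r).factorial_ne_zero
    field_simp
    linarith [h2]
  have hcm : (m.choose d : ℚ) = (m.factorial : ℚ) / ((d.factorial : ℚ) * ((m - d).factorial : ℚ)) :=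
    Nat.cast_choose ℚ hdm
  have hcn : (n.choose j : ℚ) = (n.factorial : ℚ) / ((j.factorial : ℚ) * ((n - j).factorial : ℚ)) :=
    Nat.cast_choose ℚ hjn
  rw [hdesc, hcm, hcn, ← hsign]
  have h4 : ((l - r).factorial : ℚ) ≠ 0 := Nat.cast_ne_zero.2 (l - r).factorial_ne_zero
  have h5 : (m.factorial : ℚ) ≠ 0 := Nat.cast_ne_zero.2 m.factorial_ne_zero
  have h6 : (n.factorial : ℚ) ≠ 0 := Nat.cast_ne_zero.2 n.factorial_ne_zero
  have h7 : (d.factorial : ℚ) ≠ 0 := Nat.cast_ne_zero.2 d.factorial_ne_zero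
  have h8 : (j.factorial : ℚ) ≠ 0 := Nat.cast_ne_zero.2 j.factorial_ne_zero
  have h9 : ((m - d).factorial : ℚ) ≠ 0 := Nat.cast_ne_zero.2 (m - d).factorial_ne_zero
  have h10 : ((n - j).factorial : ℚ) ≠ 0 := Nat.cast_ne_zero.2 (n - j).factorial_ne_zero
  field_simp

lemma sum_reindex (r m n : ℕ) (hm : 0 < m) (hn : 0 < n) (hr : 0 < r) :
    (∑ i ∈ Finset.range (m + 1), ∑ j ∈ Finset.range (n + 1),
        (-1 : ℚ) ^ (m - i) * (m.choose i : ℚ) *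
          ((-1 : ℚ) ^ (n - j) * (n.choose j : ℚ) * (((i * j).descFactorial r : ℕ) : ℚ))) /
      ((m.factorial : ℚ) * (n.factorial : ℚ)) =
      ∑ l ∈ Finset.Icc r (m * n),
        ∑ d ∈ l.divisors.filter (fun d => d ≤ m ∧ l / d ≤ n),
          ((l.factorial : ℚ) / ((d.factorial : ℚ) * ((l / d).factorial : ℚ))) *
            (-1 : ℚ) ^ (m + n - (d + l / d)) /
              (((m - d).factorial : ℚ) * ((n - l / d).factorial : ℚ) *
                ((l - r).factorial : ℚ)) := by
  rw [Finset.sum_div]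
  simp_rw [Finset.sum_div]
  rw [← Finset.sum_product']
  rw [Finset.sum_sigma']
  have hstep : ∀ p ∈ Finset.range (m + 1) ×ˢ Finset.range (n + 1),
      p ∉ (Finset.range (m + 1) ×ˢ Finset.range (n + 1)).filter (fun p => r ≤ p.1 * p.2) →
      (-1 : ℚ) ^ (m - p.1) * (m.choose p.1 : ℚ) *
          ((-1 : ℚ) ^ (n - p.2) * (n.choose p.2 : ℚ) *
            (((p.1 * p.2).descFactorial r : ℕ) : ℚ)) /
          ((m.factorial : ℚ) * (n.factorial : ℚ)) = 0 := by
    intro p hp hnp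
    rw [Finset.mem_filter, not_and] at hnp
    have hlt : p.1 * p.2 < r := by
      by_contra hge
      exact (hnp hp) (by omega)
    rw [Nat.descFactorial_eq_zero_iff_lt.2 hlt]
    simp
  rw [← Finset.sum_subset (Finset.filter_subset _ _) hstep]
  refine (Finset.sum_nbij' (fun q => (q.2, q.1 / q.2)) (fun p => ⟨p.1 * p.2, p.1⟩)
    ?_ ?_ ?_ ?_ ?_).symm
  · -- maps sigma → filtered product
    rintro ⟨l, d⟩ hq
    simp only [Finset.mem_sigma, Finset.mem_Icc, Finset.mem_filter, Nat.mem_divisors] at hq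
    obtain ⟨⟨hrl, hlmn⟩, ⟨hdvd, hl0⟩, hdm, hjn⟩ := hq
    simp only [Finset.mem_filter, Finset.mem_product, Finset.mem_range]
    refine ⟨⟨by omega, by omega⟩, ?_⟩
    rwa [Nat.mul_div_cancel' hdvd]
  · -- maps filtered product → sigma
    rintro ⟨i, j⟩ hp
    simp only [Finset.mem_filter, Finset.mem_product, Finset.mem_range] at hp
    obtain ⟨⟨him, hjn⟩, hrij⟩ := hp
    have hi0 : 0 < i := by
      rcases Nat.eq_zero_or_pos i with rfl | h
      · simp at hrij; omega
      · exact h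
    simp only [Finset.mem_sigma, Finset.mem_Icc, Finset.mem_filter, Nat.mem_divisors]
    refine ⟨⟨hrij, Nat.mul_le_mul (by omega) (by omega)⟩,
      ⟨dvd_mul_right i j, (lt_of_lt_of_le hr hrij).ne'⟩, by omega, ?_⟩
    rw [Nat.mul_div_cancel_left _ hi0]
    omega
  · -- left inverse
    rintro ⟨l, d⟩ hq
    simp only [Finset.mem_sigma, Finset.mem_Icc, Finset.mem_filter, Nat.mem_divisors] at hq
    obtain ⟨⟨hrl, hlmn⟩, ⟨hdvd, hl0⟩, hdm, hjn⟩ := hq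
    dsimp only
    rw [Nat.mul_div_cancel' hdvd]
  · -- right inverse
    rintro ⟨i, j⟩ hp
    simp only [Finset.mem_filter, Finset.mem_product, Finset.mem_range] at hp
    obtain ⟨⟨him, hjn⟩, hrij⟩ := hp
    have hi0 : 0 < i := by
      rcases Nat.eq_zero_or_pos i with rfl | h
      · simp at hrij; omega
      · exact h
    dsimp only
    rw [Nat.mul_div_cancel_left _ hi0]
  · -- values agree
    rintro ⟨l, d⟩ hq
    simp only [Finset.mem_sigma, Finset.mem_Icc, Finset.mem_filter, Nat.mem_divisors] at hq
    obtain ⟨⟨hrl, hlmn⟩, ⟨hdvd, hl0⟩, hdm, hjn⟩ := hq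
    dsimp only
    exact (term_eq hr hdvd hl0 hdm hjn hrl).symm
end PartialRectAux
end PartialRectAuxSection

/-- The number of partial rectangles `(π, τ)` on an `r`-set with `π` having `m` blocks
and `τ` having `n` blocks equals, in `ℚ`,
`∑_{l ≥ r} ∑_{d ∣ l, d ≤ m, l/d ≤ n} (l!/(d!·(l/d)!)) · (−1)^{m+n−(d+l/d)} /
((m−d)!·(n−l/d)!·(l−r)!)`; the outer sum has finite support since all terms with
`l > m·n` vanish, so it is truncated at `l = m·n`. -/
theorem card_partialRectangles_dims (m n r : ℕ) (hm : 0 < m) (hn : 0 < n) (hr : 0 < r) :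
    (Nat.card {p : Finpartition (Finset.univ : Finset (Fin r)) ×
          Finpartition (Finset.univ : Finset (Fin r)) //
          IsPartialRectangle p.1 p.2 ∧ p.1.parts.card = m ∧ p.2.parts.card = n} : ℚ) =
      ∑ l ∈ Finset.Icc r (m * n),
        ∑ d ∈ l.divisors.filter (fun d => d ≤ m ∧ l / d ≤ n),
          ((l.factorial : ℚ) / ((d.factorial : ℚ) * ((l / d).factorial : ℚ))) *
            (-1 : ℚ) ^ (m + n - (d + l / d)) /
              (((m - d).factorial : ℚ) * ((n - l / d).factorial : ℚ) *
                ((l - r).factorial : ℚ)) := by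
  have h1 : PartialRectAux.cc r m n =
      Nat.card {p : Finpartition (Finset.univ : Finset (Fin r)) ×
          Finpartition (Finset.univ : Finset (Fin r)) //
          IsPartialRectangle p.1 p.2 ∧ p.1.parts.card = m ∧ p.2.parts.card = n} *
        (m.factorial * n.factorial) := PartialRectAux.card_X m n
  have hmfac : (m.factorial : ℚ) ≠ 0 := Nat.cast_ne_zero.2 m.factorial_ne_zero
  have hnfac : (n.factorial : ℚ) ≠ 0 := Nat.cast_ne_zero.2 n.factorial_ne_zero
  have h2 : (Nat.card {p : Finpartition (Finset.univ : Finset (Fin r)) ×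
          Finpartition (Finset.univ : Finset (Fin r)) //
          IsPartialRectangle p.1 p.2 ∧ p.1.parts.card = m ∧ p.2.parts.card = n} : ℚ) =
      (PartialRectAux.cc r m n : ℚ) / ((m.factorial : ℚ) * (n.factorial : ℚ)) := by
    rw [h1]
    push_cast
    field_simp
  rw [h2, PartialRectAux.cc_eq r m n, PartialRectAux.sum_reindex r m n hm hn hr]
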